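/- Let G be a finite group viewed as the conjugation rack (G, ▷). The set of central elements of G is exactly the set of elements x such that {x} ∪ S is a subrack for every subrack S of G; equivalently, x ∈ Z(G) if and only if the atom {x} of R(G) joins trivially (by union) with every element of R(G). -/

import Mathlib

/-- A subset of a group closed under conjugation by its own elements. -/
def IsSubrack {G : Type*} [Group G] (S : Set G) : Prop :=
  ∀ a ∈ S, ∀ b ∈ S, a * b * a⁻¹ ∈ S

section Subrack

variable {G : Type*} [Group G]

theorem isSubrack_singleton (g : G) : IsSubrack ({g} : Set G) := by
  rintro a rfl b rfl
  simp

theorem IsSubrack.singleton_union_of_mem_center {x : G} (hx : x ∈ Subgroup.center G)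
    {S : Set G} (hS : IsSubrack S) : IsSubrack ({x} ∪ S) := by
  have hcomm := Subgroup.mem_center_iff.mp hx
  rintro a (ha | ha) b (hb | hb)
  · rw [Set.mem_singleton_iff.mp ha, Set.mem_singleton_iff.mp hb, mul_inv_cancel_right]
    exact Or.inl rfl
  · rw [Set.mem_singleton_iff.mp ha, ← hcomm b, mul_inv_cancel_right]
    exact Or.inr hb
  · rw [Set.mem_singleton_iff.mp hb, hcomm a, mul_inv_cancel_right]
    exact Or.inl rfl
  · exact Or.inr (hS a ha b hb)

theorem IsSubrack.commute_of_singleton_union_singleton {x g : G} (h : IsSubrack ({x} ∪ {g})) : Commute g x := by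
  rcases h g (Or.inr rfl) x (Or.inl rfl) with hgx | hgx
  · exact mul_inv_eq_iff_eq_mul.mp hgx
  · obtain rfl : x = g := mul_left_cancel (mul_inv_eq_iff_eq_mul.mp hgx)
    exact Commute.refl x

end Subrack

theorem stmt18_general {G : Type*} [Group G] (x : G) :
    x ∈ Subgroup.center G ↔
      ∀ S : Set G, IsSubrack S → IsSubrack ({x} ∪ S) :=
  ⟨fun hx _ hS => hS.singleton_union_of_mem_center hx,
    fun h => Subgroup.mem_center_iff.mpr fun g =>
      (h {g} (isSubrack_singleton g)).commute_of_singleton_union_singleton⟩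

/-- An element x of a finite group G is central iff {x} ∪ S is a subrack for every
subrack S, i.e. the atom {x} joins with every subrack by plain union. -/
theorem stmt18 {G : Type*} [Group G] [Finite G] (x : G) :
    x ∈ Subgroup.center G ↔
      ∀ S : Set G, IsSubrack S → IsSubrack ({x} ∪ S) :=
  stmt18_general x
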